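/- Bellman-type identity for the cost square value: for a finite MDP with nonnegative cost C and discount γ ∈ (0,1), the function S_C^π(s) := E[(Σ_{t≥0} γ^t c_t)² | s_0 = s] satisfies S_C^π(s) = E_{a∼π(·|s), s'∼P(·|s,a)}[ C(s,a,s')² + 2γ·C(s,a,s')·V_C^π(s') + γ²·S_C^π(s') ], where V_C^π(s') = E[Σ_{t≥0} γ^t c_t | s_0 = s']. -/

import Mathlib

open Finset

/-- The state at time `t` along a trajectory starting at `s0` whose `t`-th transition is
`w t = (aₜ, sₜ₊₁)`. -/
def stSeq {S A : Type*} (s0 : S) (w : ℕ → A × S) : ℕ → S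
  | 0 => s0
  | t + 1 => (w t).2

/-- Extend a finite path `w : Fin n → A × S` to an infinite sequence by a default value. -/
def extPath {S A : Type*} [Inhabited S] [Inhabited A] (n : ℕ) (w : Fin n → A × S) :
    ℕ → A × S :=
  fun t => if h : t < n then w ⟨t, h⟩ else default

/-- Probability weight of the first `n` steps of the trajectory `w` from `s0` under policy
`π` and transition kernel `P`. -/
def pathWt {S A : Type*} (π : S → A → ℝ) (P : S → A → S → ℝ) (s0 : S)
    (w : ℕ → A × S) (n : ℕ) : ℝ :=
  ∏ t ∈ Finset.range n, π (stSeq s0 w t) (w t).1 * P (stSeq s0 w t) (w t).1 (w t).2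

/-- Discounted cost accumulated over the first `n` steps of the trajectory `w` from `s0`. -/
def pathCost {S A : Type*} (C : S → A → S → ℝ) (γ : ℝ) (s0 : S)
    (w : ℕ → A × S) (n : ℕ) : ℝ :=
  ∑ t ∈ Finset.range n, γ ^ t * C (stSeq s0 w t) (w t).1 (w t).2

/-- `n`-horizon expectation of the discounted cost sum from `s0`. -/
def cExp {S A : Type*} [Fintype S] [Fintype A] [Inhabited S] [Inhabited A]
    (π : S → A → ℝ) (P : S → A → S → ℝ) (C : S → A → S → ℝ) (γ : ℝ)
    (n : ℕ) (s0 : S) : ℝ :=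
  ∑ w : Fin n → A × S,
    pathWt π P s0 (extPath n w) n * pathCost C γ s0 (extPath n w) n

/-- `n`-horizon expectation of the squared discounted cost sum from `s0`. -/
def sqExp {S A : Type*} [Fintype S] [Fintype A] [Inhabited S] [Inhabited A]
    (π : S → A → ℝ) (P : S → A → S → ℝ) (C : S → A → S → ℝ) (γ : ℝ)
    (n : ℕ) (s0 : S) : ℝ :=
  ∑ w : Fin n → A × S,
    pathWt π P s0 (extPath n w) n * (pathCost C γ s0 (extPath n w) n) ^ 2

open Filter Topology

/-! Splitting off the first transition, an `(n+1)`-step path from `s` is a transition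
`(a, s')` drawn with weight `π s a * P s a s'` followed by an `n`-step path from `s'`, and its
discounted cost is `C s a s' + γ · (cost of the rest)`. Squaring and summing over the rest
(whose weights sum to one) turns `sqExp (n+1)` into the Bellman operator applied to
`(cExp n, sqExp n)`; this operator is continuous, so the identity passes to the limit. -/

theorem Fintype.sum_fin_succ_pi {β M : Type*} [Fintype β] [AddCommMonoid M] (n : ℕ)
    (f : (Fin (n + 1) → β) → M) :
    ∑ w : Fin (n + 1) → β, f w = ∑ x : β, ∑ w : Fin n → β, f (Fin.cons x w) := by
  rw [← (Fin.consEquiv fun _ => β).sum_comp f, Fintype.sum_prod_type]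
  rfl

section Paths

variable {S A : Type*} [Inhabited S] [Inhabited A]

theorem extPath_succ_zero (n : ℕ) (w : Fin (n + 1) → A × S) : extPath (n + 1) w 0 = w 0 := by
  simp [extPath]

theorem extPath_succ_succ (n : ℕ) (w : Fin (n + 1) → A × S) (t : ℕ) :
    extPath (n + 1) w (t + 1) = extPath n (Fin.tail w) t := by
  by_cases ht : t < n
  · simp [extPath, ht, Fin.tail]
  · simp [extPath, ht]

theorem stSeq_extPath_succ_succ (s : S) (n : ℕ) (w : Fin (n + 1) → A × S) (t : ℕ) :
    stSeq s (extPath (n + 1) w) (t + 1) = stSeq (w 0).2 (extPath n (Fin.tail w)) t := by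
  cases t with
  | zero => simp [stSeq, extPath_succ_zero]
  | succ t => simp [stSeq, extPath_succ_succ]

theorem pathWt_extPath_succ (π : S → A → ℝ) (P : S → A → S → ℝ) (s : S) (n : ℕ)
    (w : Fin (n + 1) → A × S) :
    pathWt π P s (extPath (n + 1) w) (n + 1) =
      π s (w 0).1 * P s (w 0).1 (w 0).2 * pathWt π P (w 0).2 (extPath n (Fin.tail w)) n := by
  simp only [pathWt, prod_range_succ', stSeq_extPath_succ_succ, extPath_succ_succ,
    extPath_succ_zero, stSeq.eq_1]
  ring

theorem pathCost_extPath_succ (C : S → A → S → ℝ) (γ : ℝ) (s : S) (n : ℕ)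
    (w : Fin (n + 1) → A × S) :
    pathCost C γ s (extPath (n + 1) w) (n + 1) =
      C s (w 0).1 (w 0).2 + γ * pathCost C γ (w 0).2 (extPath n (Fin.tail w)) n := by
  simp only [pathCost, sum_range_succ', stSeq_extPath_succ_succ, extPath_succ_succ,
    extPath_succ_zero, stSeq.eq_1, pow_succ, mul_sum]
  ring_nf

variable [Fintype S] [Fintype A]

theorem sum_pathWt_mul_extPath_succ (π : S → A → ℝ) (P : S → A → S → ℝ) (s : S) (n : ℕ)
    (f : A × S → (ℕ → A × S) → ℝ) :
    ∑ w : Fin (n + 1) → A × S,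
        pathWt π P s (extPath (n + 1) w) (n + 1) * f (w 0) (extPath n (Fin.tail w)) =
      ∑ a, π s a * ∑ s', P s a s' *
        ∑ w : Fin n → A × S, pathWt π P s' (extPath n w) n * f (a, s') (extPath n w) := by
  simp only [Fintype.sum_fin_succ_pi, pathWt_extPath_succ, Fin.cons_zero, Fin.tail_cons,
    Fintype.sum_prod_type, mul_sum]
  exact sum_congr rfl fun _ _ => sum_congr rfl fun _ _ => sum_congr rfl fun _ _ => by ring

theorem sum_pathWt_eq_one (π : S → A → ℝ) (P : S → A → S → ℝ)
    (hπ1 : ∀ s, ∑ a, π s a = 1) (hP1 : ∀ s a, ∑ s', P s a s' = 1) (n : ℕ) (s : S) :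
    ∑ w : Fin n → A × S, pathWt π P s (extPath n w) n = 1 := by
  induction n generalizing s with
  | zero => simp [pathWt]
  | succ n ih =>
    simpa [ih, hP1, hπ1] using sum_pathWt_mul_extPath_succ π P s n fun _ _ => 1

theorem sum_pathWt_mul_sq_const_add (π : S → A → ℝ) (P : S → A → S → ℝ) (C : S → A → S → ℝ)
    (γ : ℝ) (hπ1 : ∀ s, ∑ a, π s a = 1) (hP1 : ∀ s a, ∑ s', P s a s' = 1)
    (n : ℕ) (s : S) (c : ℝ) :
    ∑ w : Fin n → A × S,
        pathWt π P s (extPath n w) n * (c + γ * pathCost C γ s (extPath n w) n) ^ 2 =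
      c ^ 2 + 2 * γ * c * cExp π P C γ n s + γ ^ 2 * sqExp π P C γ n s := by
  have hsplit : ∀ p x : ℝ, p * (c + γ * x) ^ 2 = c ^ 2 * p + 2 * γ * c * (p * x) +
      γ ^ 2 * (p * x ^ 2) := fun _ _ => by ring
  simp only [hsplit, sum_add_distrib, ← mul_sum, sum_pathWt_eq_one π P hπ1 hP1, cExp, sqExp,
    mul_one]

end Paths

def bellmanSq {S A : Type*} [Fintype S] [Fintype A] (π : S → A → ℝ) (P : S → A → S → ℝ)
    (C : S → A → S → ℝ) (γ : ℝ) (V Sq : S → ℝ) (s : S) : ℝ :=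
  ∑ a, π s a * ∑ s', P s a s' * (C s a s' ^ 2 + 2 * γ * C s a s' * V s' + γ ^ 2 * Sq s')

section Bellman

variable {S A : Type*} [Fintype S] [Fintype A]

theorem continuous_bellmanSq (π : S → A → ℝ) (P : S → A → S → ℝ) (C : S → A → S → ℝ) (γ : ℝ)
    (s : S) : Continuous fun p : (S → ℝ) × (S → ℝ) => bellmanSq π P C γ p.1 p.2 s := by
  unfold bellmanSq
  fun_prop

theorem sqExp_succ [Inhabited S] [Inhabited A] (π : S → A → ℝ) (P : S → A → S → ℝ)
    (C : S → A → S → ℝ) (γ : ℝ) (hπ1 : ∀ s, ∑ a, π s a = 1) (hP1 : ∀ s a, ∑ s', P s a s' = 1)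
    (n : ℕ) (s : S) :
    sqExp π P C γ (n + 1) s = bellmanSq π P C γ (cExp π P C γ n) (sqExp π P C γ n) s := by
  calc sqExp π P C γ (n + 1) s
      = ∑ w : Fin (n + 1) → A × S, pathWt π P s (extPath (n + 1) w) (n + 1) *
          (C s (w 0).1 (w 0).2 + γ * pathCost C γ (w 0).2 (extPath n (Fin.tail w)) n) ^ 2 := by
        simp only [sqExp, pathCost_extPath_succ]
    _ = _ := sum_pathWt_mul_extPath_succ π P s n
          fun x v => (C s x.1 x.2 + γ * pathCost C γ x.2 v n) ^ 2
    _ = _ := by simp only [sum_pathWt_mul_sq_const_add π P C γ hπ1 hP1, bellmanSq]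

end Bellman

theorem cost_square_bellman_general {S A : Type*} [Fintype S] [Fintype A] [Inhabited S] [Inhabited A]
    (π : S → A → ℝ) (P : S → A → S → ℝ) (C : S → A → S → ℝ) (γ : ℝ)
    (hπ1 : ∀ s, ∑ a, π s a = 1)
    (hP1 : ∀ s a, ∑ s', P s a s' = 1)
    (VC SC : S → ℝ)
    (hVC : ∀ s, Filter.Tendsto (fun n => cExp π P C γ n s) Filter.atTop (nhds (VC s)))
    (hSC : ∀ s, Filter.Tendsto (fun n => sqExp π P C γ n s) Filter.atTop (nhds (SC s))) :
    ∀ s, SC s = ∑ a, π s a * ∑ s', P s a s' *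
      (C s a s' ^ 2 + 2 * γ * C s a s' * VC s' + γ ^ 2 * SC s') := by
  intro s
  have hmoments : Tendsto (fun n => (cExp π P C γ n, sqExp π P C γ n)) atTop (𝓝 (VC, SC)) :=
    (tendsto_pi_nhds.2 hVC).prodMk_nhds (tendsto_pi_nhds.2 hSC)
  have hbellman : Tendsto (fun n => sqExp π P C γ (n + 1) s) atTop
      (𝓝 (bellmanSq π P C γ VC SC s)) := by
    simpa only [sqExp_succ π P C γ hπ1 hP1, Function.comp_def] using
      ((continuous_bellmanSq π P C γ s).tendsto _).comp hmoments
  exact tendsto_nhds_unique ((hSC s).comp (tendsto_add_atTop_nat 1)) hbellman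

/-- Bellman-type identity for the cost square value: if `V_C^π(s)` and `S_C^π(s)` are the
limits of the finite-horizon expectations of the discounted cost sum and its square, then
`S_C^π(s) = E_{a∼π(·|s), s'∼P(·|s,a)}[C(s,a,s')² + 2γ·C(s,a,s')·V_C^π(s') + γ²·S_C^π(s')]`. -/
theorem cost_square_bellman {S A : Type*} [Fintype S] [Fintype A] [Inhabited S] [Inhabited A]
    (π : S → A → ℝ) (P : S → A → S → ℝ) (C : S → A → S → ℝ) (γ : ℝ)
    (hπ0 : ∀ s a, 0 ≤ π s a) (hπ1 : ∀ s, ∑ a, π s a = 1)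
    (hP0 : ∀ s a s', 0 ≤ P s a s') (hP1 : ∀ s a, ∑ s', P s a s' = 1)
    (hC0 : ∀ s a s', 0 ≤ C s a s') (hCb : ∃ M, ∀ s a s', C s a s' ≤ M)
    (hγ : γ ∈ Set.Ioo (0 : ℝ) 1)
    (VC SC : S → ℝ)
    (hVC : ∀ s, Filter.Tendsto (fun n => cExp π P C γ n s) Filter.atTop (nhds (VC s)))
    (hSC : ∀ s, Filter.Tendsto (fun n => sqExp π P C γ n s) Filter.atTop (nhds (SC s))) :
    ∀ s, SC s = ∑ a, π s a * ∑ s', P s a s' *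
      (C s a s' ^ 2 + 2 * γ * C s a s' * VC s' + γ ^ 2 * SC s') :=
  cost_square_bellman_general π P C γ hπ1 hP1 VC SC hVC hSC
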